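/- Let m ≥ 1 and let PA denote the linear sublattice of C(ℝ^m) generated by the affine functions, i.e., the smallest subset of C(ℝ^m) containing all maps x ↦ w·x + b (w ∈ ℝ^m, b ∈ ℝ) and closed under addition, scalar multiplication, and the pointwise lattice operations ⊔ and ⊓. Then for every continuous f : ℝ^m → ℝ with f ≥ 0 there exists a sequence (e_n) with each e_n ∈ PA having compact support, 0 ≤ e_n ≤ f, e_n ≤ e_{n+1} for all n, which converges relatively uniformly to f: there is a continuous g : ℝ^m → ℝ such that for every ε > 0 there is N with |f(x) − e_n(x)| ≤ ε·g(x) for all n ≥ N and all x ∈ ℝ^m. -/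
import Mathlib
set_option maxHeartbeats 1000000

open Metric

namespace Stmt19Aux

variable {m : ℕ}

/-- An affine continuous map. -/
def affMap (m : ℕ) (w : Fin m → ℝ) (b : ℝ) : C(Fin m → ℝ, ℝ) :=
  ⟨fun x => (∑ i, w i * x i) + b, by fun_prop⟩

@[simp] lemma affMap_apply (w : Fin m → ℝ) (b : ℝ) (x : Fin m → ℝ) :
    affMap m w b x = (∑ i, w i * x i) + b := rfl

lemma zero_eq_affMap : (0 : C(Fin m → ℝ, ℝ)) = affMap m 0 0 := by
  ext x; simp

/-- The ℓ¹ distance to `a`, as a continuous map. -/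
def dsum (a : Fin m → ℝ) : C(Fin m → ℝ, ℝ) :=
  ∑ i, (affMap m (Pi.single i 1) (-(a i)) ⊔ affMap m (Pi.single i (-1)) (a i))

lemma dsum_apply (a x : Fin m → ℝ) : dsum a x = ∑ i, |x i - a i| := by
  simp only [dsum]
  rw [show ((∑ i, (affMap m (Pi.single i 1) (-(a i)) ⊔ affMap m (Pi.single i (-1)) (a i)))
      : C(Fin m → ℝ, ℝ)) x
    = ∑ i, ((affMap m (Pi.single i 1) (-(a i)) ⊔ affMap m (Pi.single i (-1)) (a i)) x) by
      simp]
  refine Finset.sum_congr rfl fun i _ => ?_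
  rw [ContinuousMap.sup_apply, affMap_apply, affMap_apply]
  have h1 : ∑ j : Fin m, (Pi.single i (1:ℝ) : Fin m → ℝ) j * x j = x i := by
    simp [Pi.single_apply]
  have h2 : ∑ j : Fin m, (Pi.single i (-1:ℝ) : Fin m → ℝ) j * x j = -x i := by
    simp [Pi.single_apply]
  rw [h1, h2]
  have h3 : (x i + -a i) ⊔ (-x i + a i) = (x i - a i) ⊔ (-(x i - a i)) := by
    congr 1 <;> ring
  rw [h3]
  exact (abs_eq_max_neg).symm

lemma dsum_nonneg (a x : Fin m → ℝ) : 0 ≤ dsum a x := by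
  rw [dsum_apply]; positivity

lemma dist_le_dsum (a x : Fin m → ℝ) : dist x a ≤ dsum a x := by
  rw [dsum_apply]
  rw [dist_pi_le_iff (by positivity)]
  intro i
  rw [Real.dist_eq]
  exact Finset.single_le_sum (f := fun i => |x i - a i|) (fun j _ => abs_nonneg _)
    (Finset.mem_univ i)

lemma dsum_le (a x : Fin m → ℝ) : dsum a x ≤ m * dist x a := by
  rw [dsum_apply]
  calc ∑ i, |x i - a i| ≤ ∑ _i : Fin m, dist x a := by
        refine Finset.sum_le_sum fun i _ => ?_
        rw [← Real.dist_eq]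
        exact dist_le_pi_dist x a i
    _ = m * dist x a := by simp [mul_comm]

/-- A tent function: `max 0 (c - (c/r) * ℓ¹-dist to a)`. -/
noncomputable def tent (a : Fin m → ℝ) (c r : ℝ) : C(Fin m → ℝ, ℝ) :=
  0 ⊔ (affMap m 0 c + (-(c / r)) • dsum a)

lemma tent_apply (a : Fin m → ℝ) (c r : ℝ) (x : Fin m → ℝ) :
    tent a c r x = max 0 (c - (c / r) * dsum a x) := by
  simp only [tent, ContinuousMap.sup_apply, ContinuousMap.add_apply, ContinuousMap.smul_apply,
    affMap_apply, ContinuousMap.zero_apply]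
  congr 1
  simp
  ring

lemma tent_nonneg (a : Fin m → ℝ) (c r : ℝ) : (0 : C(Fin m → ℝ, ℝ)) ≤ tent a c r :=
  le_sup_left

lemma tent_le {f : C(Fin m → ℝ, ℝ)} (hf : 0 ≤ f) {a : Fin m → ℝ} {c r : ℝ}
    (hc : 0 ≤ c) (hr : 0 < r) (hball : ∀ x, dsum a x ≤ r → c ≤ f x) :
    tent a c r ≤ f := by
  rw [ContinuousMap.le_def]
  intro x
  have hfx : 0 ≤ f x := hf x
  rw [tent_apply]
  rcases le_or_gt (dsum a x) r with h | h
  · refine max_le hfx ?_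
    have : 0 ≤ (c / r) * dsum a x := mul_nonneg (by positivity) (dsum_nonneg a x)
    have := hball x h
    linarith
  · refine max_le hfx ?_
    have hd : c / r * r ≤ c / r * dsum a x := by
      have : 0 ≤ c / r := by positivity
      nlinarith
    rw [div_mul_cancel₀ c (ne_of_gt hr)] at hd
    linarith

lemma tent_eq_zero {a : Fin m → ℝ} {c r : ℝ} (hc : 0 ≤ c) (hr : 0 < r)
    {x : Fin m → ℝ} (hx : r < dsum a x) : tent a c r x = 0 := by
  rw [tent_apply]
  have hd : c / r * r ≤ c / r * dsum a x := by
    have : 0 ≤ c / r := by positivity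
    nlinarith
  rw [div_mul_cancel₀ c (ne_of_gt hr)] at hd
  exact max_eq_left (by linarith)

lemma tent_hcs {a : Fin m → ℝ} {c r : ℝ} (hc : 0 ≤ c) (hr : 0 < r) :
    HasCompactSupport ⇑(tent a c r) := by
  apply HasCompactSupport.intro (isCompact_closedBall a r)
  intro x hx
  rw [mem_closedBall] at hx
  push_neg at hx
  exact tent_eq_zero hc hr (lt_of_lt_of_le hx (dist_le_dsum a x))

lemma tent_lower (a : Fin m → ℝ) (c r : ℝ) (x : Fin m → ℝ) :
    c - (c / r) * dsum a x ≤ tent a c r x := by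
  rw [tent_apply]; exact le_max_right _ _

lemma hcs_sup {q q' : C(Fin m → ℝ, ℝ)} (hq : HasCompactSupport ⇑q)
    (hq' : HasCompactSupport ⇑q') : HasCompactSupport ⇑(q ⊔ q') := by
  apply HasCompactSupport.intro (hq.union hq')
  intro x hx
  rw [Set.mem_union] at hx
  push_neg at hx
  have h1 : q x = 0 := image_eq_zero_of_notMem_tsupport hx.1
  have h2 : q' x = 0 := image_eq_zero_of_notMem_tsupport hx.2
  rw [ContinuousMap.sup_apply, h1, h2, max_self]

section approx

variable (S : Set C(Fin m → ℝ, ℝ))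
variable (haff : ∀ w b, affMap m w b ∈ S)
variable (hadd : ∀ x ∈ S, ∀ y ∈ S, x + y ∈ S)
variable (hsmul : ∀ (c : ℝ), ∀ x ∈ S, c • x ∈ S)
variable (hsup : ∀ x ∈ S, ∀ y ∈ S, x ⊔ y ∈ S)

include haff hadd hsmul hsup

lemma zero_mem : (0 : C(Fin m → ℝ, ℝ)) ∈ S := zero_eq_affMap ▸ haff 0 0

lemma dsum_mem (a : Fin m → ℝ) : dsum a ∈ S := by
  refine Finset.sum_induction _ (· ∈ S) (fun x y hx hy => hadd x hx y hy)
    (zero_mem S haff hadd hsmul hsup) (fun i _ => hsup _ (haff _ _) _ (haff _ _))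

lemma tent_mem (a : Fin m → ℝ) (c r : ℝ) : tent a c r ∈ S :=
  hsup _ (zero_mem S haff hadd hsmul hsup) _
    (hadd _ (haff 0 c) _ (hsmul _ _ (dsum_mem S haff hadd hsmul hsup a)))

lemma exists_approx (hm : 1 ≤ m) (f : C(Fin m → ℝ, ℝ)) (hf : 0 ≤ f)
    (K : Set (Fin m → ℝ)) (hK : IsCompact K) {ε : ℝ} (hε : 0 < ε) :
    ∃ p ∈ S, HasCompactSupport ⇑p ∧ 0 ≤ p ∧ p ≤ f ∧ ∀ x ∈ K, f x - p x ≤ ε := by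
  -- pointwise continuity data
  have hcont : ∀ a : Fin m → ℝ, ∃ δ > 0, ∀ x, dist x a < δ → |f x - f a| < ε / 3 := by
    intro a
    have := Metric.continuousAt_iff.1 (f.continuous.continuousAt (x := a)) (ε / 3)
      (by linarith)
    obtain ⟨δ, hδ, h⟩ := this
    exact ⟨δ, hδ, fun x hx => by rw [← Real.dist_eq]; exact h hx⟩
  choose δ hδpos hδ using hcont
  set c : (Fin m → ℝ) → ℝ := fun a => max 0 (f a - ε / 3) with hc
  set r : (Fin m → ℝ) → ℝ := fun a => δ a / 2 with hrdef
  have hrpos : ∀ a, 0 < r a := fun a => by simpa [hrdef] using half_pos (hδpos a)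
  have hcnn : ∀ a, 0 ≤ c a := fun a => le_max_left _ _
  set ρ : (Fin m → ℝ) → ℝ := fun a => min (r a) (ε * r a / (3 * m * (c a + 1))) with hρdef
  have hmpos : (0 : ℝ) < m := by exact_mod_cast hm
  have hρpos : ∀ a, 0 < ρ a := by
    intro a
    refine lt_min (hrpos a) ?_
    have := hrpos a
    have := hcnn a
    positivity
  -- ball property for tents
  have hball : ∀ a, ∀ x, dsum a x ≤ r a → c a ≤ f x := by
    intro a x hx
    have hdist : dist x a < δ a := lt_of_le_of_lt (le_trans (dist_le_dsum a x) hx)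
      (by have := hδpos a; simp only [hrdef]; linarith)
    have := hδ a x hdist
    have h1 : f a - ε / 3 ≤ f x := by
      have := abs_lt.1 this
      linarith [this.1]
    exact max_le (hf x) h1
  have hcge : ∀ a, f a - ε / 3 ≤ c a := fun a => le_max_right _ _
  have hρr : ∀ a, ρ a ≤ r a := fun a => min_le_left _ _
  have hρ2 : ∀ a, ρ a ≤ ε * r a / (3 * m * (c a + 1)) := fun a => min_le_right _ _
  have hrδ : ∀ a, r a < δ a := fun a => by
    simp only [hrdef]; linarith [hδpos a]
  clear hc hrdef hρdef
  clear_value c r ρ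
  -- covering
  obtain ⟨t, ht⟩ := hK.elim_finite_subcover (fun a => Metric.ball a (ρ a))
    (fun a => isOpen_ball) (fun x hx => Set.mem_iUnion.2 ⟨x, mem_ball_self (hρpos x)⟩)
  rcases t.eq_empty_or_nonempty with rfl | hne
  · refine ⟨0, zero_mem S haff hadd hsmul hsup, ?_, le_refl _, hf, ?_⟩
    · simpa using HasCompactSupport.zero (α := Fin m → ℝ) (β := ℝ)
    · intro x hx
      exact absurd (ht hx) (by simp)
  · have hTle : ∀ a, tent a (c a) (r a) ≤ f :=
      fun a => tent_le hf (hcnn a) (hrpos a) (hball a)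
    refine ⟨t.sup' hne (fun a => tent a (c a) (r a)), ?_, ?_, ?_, ?_, ?_⟩
    · exact Finset.sup'_induction (p := fun q : C(Fin m → ℝ, ℝ) => q ∈ S) hne _
        (fun x hx y hy => hsup x hx y hy)
        (fun a _ => tent_mem S haff hadd hsmul hsup a _ _)
    · exact Finset.sup'_induction
        (p := fun q : C(Fin m → ℝ, ℝ) => HasCompactSupport ⇑q) hne _
        (fun x hx y hy => hcs_sup hx hy)
        (fun a _ => tent_hcs (hcnn a) (hrpos a))
    · obtain ⟨a, ha⟩ := hne
      exact le_trans (tent_nonneg a (c a) (r a))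
        (Finset.le_sup' (f := fun a => tent a (c a) (r a)) ha)
    · exact Finset.sup'_le hne _ fun a _ => hTle a
    · intro x hx
      obtain ⟨a, hat, hxa⟩ := by
        have := ht hx
        simpa only [Set.mem_iUnion, exists_prop] using this
      rw [mem_ball] at hxa
      -- lower bound for tent a at x
      have hd : dsum a x ≤ m * ρ a :=
        le_trans (dsum_le a x) (by nlinarith [hxa, hmpos])
      have hcr : 0 ≤ c a / r a := div_nonneg (hcnn a) (le_of_lt (hrpos a))
      have hkey : c a / r a * dsum a x ≤ ε / 3 := by
        have hmr : (0:ℝ) ≤ m := le_of_lt hmpos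
        have h1 : c a / r a * dsum a x ≤ c a / r a * (m * ρ a) := by nlinarith
        have h2 : c a / r a * (m * ρ a) ≤ c a / r a * (m * (ε * r a / (3 * m * (c a + 1)))) :=
          mul_le_mul_of_nonneg_left (mul_le_mul_of_nonneg_left (hρ2 a) hmr) hcr
        have h3 : c a / r a * (m * (ε * r a / (3 * m * (c a + 1)))) = ε * c a / (3 * (c a + 1)) := by
          have hr0 : r a ≠ 0 := ne_of_gt (hrpos a)
          have hm0 : (m : ℝ) ≠ 0 := ne_of_gt hmpos
          have hc1 : c a + 1 ≠ 0 := by have := hcnn a; intro h; linarith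
          field_simp
        have h4 : ε * c a / (3 * (c a + 1)) ≤ ε / 3 := by
          rw [div_le_div_iff₀ (by nlinarith [hcnn a]) (by norm_num)]
          nlinarith [hcnn a]
        linarith
      have htp : tent a (c a) (r a) x ≤ (t.sup' hne fun a => tent a (c a) (r a)) x :=
        ContinuousMap.le_def.1
          (Finset.le_sup' (f := fun a => tent a (c a) (r a)) hat) x
      have hfx : f x < f a + ε / 3 := by
        have := hδ a x (lt_of_lt_of_le hxa (le_trans (hρr a) (le_of_lt (hrδ a))))
        have := abs_lt.1 this
        linarith [this.2]
      have hca : f a - ε / 3 ≤ c a := hcge a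
      have : c a - (c a / r a) * dsum a x ≤ tent a (c a) (r a) x := tent_lower a (c a) (r a) x
      linarith

end approx

end Stmt19Aux

open Stmt19Aux in
theorem stmt_19 (m : ℕ) (hm : 1 ≤ m)
    (PA : Set C(Fin m → ℝ, ℝ))
    (hPA : PA = ⋂₀ {S : Set C(Fin m → ℝ, ℝ) |
      {h : C(Fin m → ℝ, ℝ) | ∃ (w : Fin m → ℝ) (b : ℝ),
        ∀ x : Fin m → ℝ, h x = (∑ i, w i * x i) + b} ⊆ S ∧
      (∀ x ∈ S, ∀ y ∈ S, x + y ∈ S) ∧ (∀ (c : ℝ), ∀ x ∈ S, c • x ∈ S) ∧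
      (∀ x ∈ S, ∀ y ∈ S, x ⊔ y ∈ S) ∧ (∀ x ∈ S, ∀ y ∈ S, x ⊓ y ∈ S)})
    (f : C(Fin m → ℝ, ℝ)) (hf : 0 ≤ f) :
    ∃ e : ℕ → C(Fin m → ℝ, ℝ),
      (∀ n : ℕ, e n ∈ PA ∧ HasCompactSupport (e n : (Fin m → ℝ) → ℝ)) ∧
      (∀ n : ℕ, 0 ≤ e n ∧ e n ≤ f) ∧ (∀ n : ℕ, e n ≤ e (n + 1)) ∧
      ∃ g : C(Fin m → ℝ, ℝ), ∀ ε : ℝ, 0 < ε → ∃ N : ℕ, ∀ n ≥ N, ∀ x : Fin m → ℝ,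
        |f x - e n x| ≤ ε * g x := by
  -- closure properties of PA
  have haff : ∀ w b, affMap m w b ∈ PA := by
    intro w b
    rw [hPA]
    intro S hS
    exact hS.1 ⟨w, b, fun x => rfl⟩
  have hadd : ∀ x ∈ PA, ∀ y ∈ PA, x + y ∈ PA := by
    intro x hx y hy
    rw [hPA] at hx hy ⊢
    intro S hS
    exact hS.2.1 x (hx S hS) y (hy S hS)
  have hsmul : ∀ (c : ℝ), ∀ x ∈ PA, c • x ∈ PA := by
    intro c x hx
    rw [hPA] at hx ⊢
    intro S hS
    exact hS.2.2.1 c x (hx S hS)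
  have hsup : ∀ x ∈ PA, ∀ y ∈ PA, x ⊔ y ∈ PA := by
    intro x hx y hy
    rw [hPA] at hx hy ⊢
    intro S hS
    exact hS.2.2.2.1 x (hx S hS) y (hy S hS)
  -- approximating sequence
  have hstep : ∀ n : ℕ, ∃ p ∈ PA, HasCompactSupport ⇑p ∧ 0 ≤ p ∧ p ≤ f ∧
      ∀ x ∈ Metric.closedBall (0 : Fin m → ℝ) n, f x - p x ≤ 1 / (n + 1) := by
    intro n
    exact exists_approx PA haff hadd hsmul hsup hm f hf _ (isCompact_closedBall 0 n)
      (by positivity)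
  choose p hpmem hphcs hp0 hpf hpK using hstep
  -- running maxima
  set e : ℕ → C(Fin m → ℝ, ℝ) := fun n => Nat.rec (p 0) (fun k ek => ek ⊔ p (k + 1)) n with he
  have he0 : e 0 = p 0 := rfl
  have heS : ∀ n, e (n + 1) = e n ⊔ p (n + 1) := fun n => rfl
  have hprops : ∀ n, e n ∈ PA ∧ HasCompactSupport ⇑(e n) ∧ 0 ≤ e n ∧ e n ≤ f ∧ p n ≤ e n := by
    intro n
    induction n with
    | zero => exact ⟨hpmem 0, hphcs 0, hp0 0, hpf 0, le_refl _⟩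
    | succ k ih =>
      rw [heS]
      refine ⟨hsup _ ih.1 _ (hpmem (k+1)), hcs_sup ih.2.1 (hphcs (k+1)),
        le_trans ih.2.2.1 le_sup_left, sup_le ih.2.2.2.1 (hpf (k+1)), le_sup_right⟩
  refine ⟨e, fun n => ⟨(hprops n).1, (hprops n).2.1⟩,
    fun n => ⟨(hprops n).2.2.1, (hprops n).2.2.2.1⟩,
    fun n => heS n ▸ le_sup_left, ?_⟩
  -- the regulator
  refine ⟨⟨fun x => 1 + f x * ‖x‖, by fun_prop⟩, ?_⟩
  intro ε hε
  refine ⟨⌈1/ε⌉₊, fun n hn x => ?_⟩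
  have hcoe : (⟨fun x => 1 + f x * ‖x‖, by fun_prop⟩ : C(Fin m → ℝ, ℝ)) x
      = 1 + f x * ‖x‖ := rfl
  rw [hcoe]
  have h0e : 0 ≤ e n x := (hprops n).2.2.1 x
  have hef : e n x ≤ f x := (hprops n).2.2.2.1 x
  have hfx : 0 ≤ f x := hf x
  have hNε : 1 / ε ≤ (⌈1/ε⌉₊ : ℝ) := Nat.le_ceil _
  have hnN : ((⌈1/ε⌉₊ : ℕ) : ℝ) ≤ (n : ℝ) := by exact_mod_cast hn
  rw [abs_of_nonneg (by linarith)]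
  rcases le_or_gt ‖x‖ n with hx | hx
  · have hxK : x ∈ Metric.closedBall (0 : Fin m → ℝ) n := by
      rw [mem_closedBall, dist_zero_right]; exact hx
    have h1 : f x - p n x ≤ 1 / (n + 1) := hpK n x hxK
    have h2 : p n x ≤ e n x := (hprops n).2.2.2.2 x
    have h3 : 1 / (n + 1 : ℝ) ≤ ε := by
      rw [div_le_iff₀ (by positivity)]
      have : 1 / ε ≤ (n : ℝ) + 1 := by linarith
      rw [div_le_iff₀ hε] at this
      linarith
    have h4 : ε * 1 ≤ ε * (1 + f x * ‖x‖) := by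
      have : 0 ≤ f x * ‖x‖ := by positivity
      nlinarith
    linarith
  · have h1 : 1 / ε ≤ ‖x‖ := by linarith
    have h2 : 1 ≤ ε * ‖x‖ := by
      rw [div_le_iff₀ hε] at h1
      linarith
    have h3 : f x ≤ ε * (1 + f x * ‖x‖) := by nlinarith
    linarith
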